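/- Lower-bound construction showing tightness: let {|i⟩}ᵢ₌₁^d be an orthonormal basis of ℂ^d, ρ_c = I/d, and for ε ∈ (0,1) set ρᵢ = |i⟩⟨i|, σᵢ = (1−ε)|i⟩⟨i| + ε·ρ_c, pᵢ = qᵢ = 1/d. Then D₀({pᵢ,ρᵢ},{qᵢ,σᵢ}) = ε(1 − 1/d) and χ({pᵢ,ρᵢ}) − χ({qᵢ,σᵢ}) = H(σ₁) ≥ ε·log d. -/

import Mathlib

set_option maxHeartbeats 1000000

open Matrix Real
open scoped ComplexOrder

noncomputable section

/-- The von Neumann entropy of a (Hermitian) matrix, via its eigenvalues. -/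
def vnEntropy {n : Type*} [Fintype n] [DecidableEq n] (A : Matrix n n ℂ) : ℝ :=
  if h : A.IsHermitian then ∑ i, Real.negMulLog (h.eigenvalues i) else 0

/-- The trace norm of a matrix: the sum of its singular values. -/
def traceNorm {n : Type*} [Fintype n] [DecidableEq n] (A : Matrix n n ℂ) : ℝ :=
  ∑ i, Real.sqrt ((Matrix.posSemidef_conjTranspose_mul_self A).1.eigenvalues i)

/-- The Holevo quantity χ({pᵢ,ρᵢ}) = H(Σᵢ pᵢρᵢ) − Σᵢ pᵢ H(ρᵢ). -/
def holevo {ι n : Type*} [Fintype ι] [Fintype n] [DecidableEq n]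
    (p : ι → ℝ) (ρ : ι → Matrix n n ℂ) : ℝ :=
  vnEntropy (∑ i, p i • ρ i) - ∑ i, p i * vnEntropy (ρ i)

open Polynomial in
lemma eig_multiset {d : ℕ} (f : Fin d → ℝ)
    (h : (Matrix.diagonal fun i : Fin d => (f i : ℂ)).IsHermitian) :
    Finset.univ.val.map h.eigenvalues = Finset.univ.val.map f := by
  set U : Matrix (Fin d) (Fin d) ℂ := (h.eigenvectorUnitary : Matrix (Fin d) (Fin d) ℂ) with hUdef
  have hU : U * star U = 1 := Matrix.mem_unitaryGroup_iff.mp h.eigenvectorUnitary.2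
  have hdet : ∀ x : ℂ, ∏ i, (x - (h.eigenvalues i : ℂ)) = ∏ i, (x - (f i : ℂ)) := by
    intro x
    have h1 : Matrix.diagonal (fun i : Fin d => x - (f i : ℂ))
        = x • (1 : Matrix (Fin d) (Fin d) ℂ) - Matrix.diagonal fun i => (f i : ℂ) := by
      ext i j
      by_cases hij : i = j <;> simp [hij, Matrix.one_apply, Matrix.diagonal_apply]
    have h1' : Matrix.diagonal (fun i : Fin d => x - (h.eigenvalues i : ℂ))
        = x • (1 : Matrix (Fin d) (Fin d) ℂ)
          - Matrix.diagonal (RCLike.ofReal ∘ h.eigenvalues) := by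
      ext i j
      by_cases hij : i = j <;> simp [hij, Matrix.one_apply, Matrix.diagonal_apply]
    have h2 : x • (1 : Matrix (Fin d) (Fin d) ℂ) - (Matrix.diagonal fun i => (f i : ℂ))
        = U * (Matrix.diagonal fun i : Fin d => x - (h.eigenvalues i : ℂ)) * star U := by
      conv_lhs => rw [h.spectral_theorem]
      rw [Unitary.conjStarAlgAut_apply, ← hUdef]
      rw [h1', Matrix.mul_sub, Matrix.sub_mul, Matrix.mul_smul, Matrix.mul_one,
        Matrix.smul_mul, hU]
    have := congrArg Matrix.det h2
    rw [Matrix.det_mul, Matrix.det_mul, mul_comm U.det, mul_assoc, ← Matrix.det_mul,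
      hU, Matrix.det_one, mul_one, ← h1, Matrix.det_diagonal, Matrix.det_diagonal] at this
    exact this.symm
  -- polynomial identity
  have hpoly : (((Finset.univ.val.map h.eigenvalues).map (fun r : ℝ => ((r : ℂ)))).map
        (fun a : ℂ => (X : ℂ[X]) - C a)).prod
      = (((Finset.univ.val.map f).map (fun r : ℝ => ((r : ℂ)))).map
        (fun a : ℂ => (X : ℂ[X]) - C a)).prod := by
    apply Polynomial.funext
    intro x
    rw [Polynomial.eval_multiset_prod, Polynomial.eval_multiset_prod]
    simp only [Multiset.map_map, Function.comp]
    have e1 : ∀ (g : Fin d → ℝ), (Finset.univ.val.map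
        (fun i => Polynomial.eval x ((X : ℂ[X]) - C (g i : ℂ)))).prod
        = ∏ i, (x - (g i : ℂ)) := by
      intro g
      rw [Finset.prod_eq_multiset_prod]
      simp
    rw [e1, e1, hdet]
  have := congrArg Polynomial.roots hpoly
  rw [Polynomial.roots_multiset_prod_X_sub_C, Polynomial.roots_multiset_prod_X_sub_C] at this
  exact Multiset.map_injective Complex.ofReal_injective this

lemma eig_sum {d : ℕ} {A : Matrix (Fin d) (Fin d) ℂ} (hA : A.IsHermitian) (f : Fin d → ℝ)
    (hAf : A = Matrix.diagonal fun i => (f i : ℂ)) (g : ℝ → ℝ) :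
    ∑ i, g (hA.eigenvalues i) = ∑ i, g (f i) := by
  subst hAf
  rw [Finset.sum_eq_multiset_sum, Finset.sum_eq_multiset_sum,
    show (Finset.univ.val.map fun i => g (hA.eigenvalues i))
      = (Finset.univ.val.map hA.eigenvalues).map g by rw [Multiset.map_map]; rfl,
    show (Finset.univ.val.map fun i => g (f i)) = (Finset.univ.val.map f).map g by
      rw [Multiset.map_map]; rfl,
    eig_multiset f hA]

lemma isHermitian_diagonal_real {d : ℕ} (f : Fin d → ℝ) :
    (Matrix.diagonal fun i : Fin d => (f i : ℂ)).IsHermitian := by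
  ext i j
  rcases eq_or_ne i j with h | h
  · subst h
    simp [Matrix.conjTranspose_apply, Complex.conj_ofReal]
  · simp [Matrix.conjTranspose_apply, Matrix.diagonal_apply_ne _ h,
      Matrix.diagonal_apply_ne _ h.symm]

lemma vnEntropy_diagonal {d : ℕ} (f : Fin d → ℝ) (A : Matrix (Fin d) (Fin d) ℂ)
    (hAf : A = Matrix.diagonal fun i => (f i : ℂ)) :
    vnEntropy A = ∑ i, Real.negMulLog (f i) := by
  have hA : A.IsHermitian := hAf ▸ isHermitian_diagonal_real f
  rw [vnEntropy, dif_pos hA]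
  exact eig_sum hA f hAf _

lemma traceNorm_diagonal {d : ℕ} (f : Fin d → ℝ) (A : Matrix (Fin d) (Fin d) ℂ)
    (hAf : A = Matrix.diagonal fun i => (f i : ℂ)) :
    traceNorm A = ∑ i, |f i| := by
  have h2 : Aᴴ * A = Matrix.diagonal fun i => ((f i ^ 2 : ℝ) : ℂ) := by
    rw [hAf, Matrix.diagonal_conjTranspose, Matrix.diagonal_mul_diagonal]
    ext i j
    rcases eq_or_ne i j with h | h
    · subst h
      simp only [Matrix.diagonal_apply_eq, Pi.star_apply, Complex.star_def, Complex.conj_ofReal]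
      push_cast
      ring
    · simp [Matrix.diagonal_apply_ne _ h]
  rw [traceNorm, eig_sum (Matrix.posSemidef_conjTranspose_mul_self A).1 _ h2 Real.sqrt]
  exact Finset.sum_congr rfl fun i _ => Real.sqrt_sq_eq_abs _

lemma sum_if {d : ℕ} (i : Fin d) (a b : ℝ) :
    ∑ j : Fin d, (if j = i then a else b) = a + ((d : ℝ) - 1) * b := by
  rw [← Finset.add_sum_erase Finset.univ _ (Finset.mem_univ i), if_pos rfl]
  congr 1
  rw [Finset.sum_congr rfl (fun j hj => if_neg (Finset.ne_of_mem_erase hj)),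
    Finset.sum_const, Finset.card_erase_of_mem (Finset.mem_univ i), Finset.card_univ,
    Fintype.card_fin, nsmul_eq_mul]
  have : 1 ≤ d := i.pos
  push_cast [this]
  ring

lemma sum_if' {d : ℕ} (i : Fin d) (a b : ℝ) :
    ∑ j : Fin d, (if i = j then a else b) = a + ((d : ℝ) - 1) * b := by
  rw [← sum_if i a b]
  exact Finset.sum_congr rfl fun j _ => by simp only [eq_comm]

theorem holevo_tightness_example (d : ℕ) (hd : 0 < d) (ε : ℝ) (hε0 : 0 < ε) (hε1 : ε < 1) :
    let ρc : Matrix (Fin d) (Fin d) ℂ := ((d : ℂ)⁻¹) • (1 : Matrix (Fin d) (Fin d) ℂ)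
    let ρ : Fin d → Matrix (Fin d) (Fin d) ℂ := fun i => Matrix.single i i (1 : ℂ)
    let σ : Fin d → Matrix (Fin d) (Fin d) ℂ := fun i => (1 - ε) • ρ i + ε • ρc
    let p : Fin d → ℝ := fun _ => (d : ℝ)⁻¹
    (∑ i, traceNorm (p i • ρ i - p i • σ i)) / 2 = ε * (1 - (d : ℝ)⁻¹) ∧
    holevo p ρ - holevo p σ = vnEntropy (σ ⟨0, hd⟩) ∧
    vnEntropy (σ ⟨0, hd⟩) ≥ ε * Real.log d := by
  intro ρc ρ σ p
  have hd0 : (0 : ℝ) < d := Nat.cast_pos.mpr hd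
  have hdne : (d : ℝ) ≠ 0 := ne_of_gt hd0
  have hd1 : (1 : ℝ) ≤ d := by exact_mod_cast hd
  have hinv0 : (0 : ℝ) ≤ (d : ℝ)⁻¹ := inv_nonneg.mpr hd0.le
  have hinv1 : (d : ℝ)⁻¹ ≤ 1 := by
    rw [inv_le_one_iff₀]; right; exact hd1
  -- matrix identities
  have hρ : ∀ i, ρ i = Matrix.diagonal fun j => ((if j = i then (1 : ℝ) else 0 : ℝ) : ℂ) := by
    intro i
    ext a b
    rcases eq_or_ne a b with h | h
    · subst h
      by_cases hia : i = a <;>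
        simp [ρ, Matrix.single, hia, eq_comm]
    · simp [ρ, Matrix.single, Matrix.diagonal_apply_ne _ h]
      rintro rfl rfl
      exact h rfl
  have hσ : ∀ i, σ i = Matrix.diagonal
      fun j => ((if j = i then 1 - ε + ε * (d : ℝ)⁻¹ else ε * (d : ℝ)⁻¹ : ℝ) : ℂ) := by
    intro i
    rw [show σ i = (1 - ε) • ρ i + ε • ρc from rfl, hρ i]
    ext a b
    rcases eq_or_ne a b with h | h
    · subst h
      by_cases hia : a = i
      all_goals
        simp only [Matrix.add_apply, Matrix.smul_apply, Matrix.diagonal_apply_eq,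
          Matrix.one_apply_eq, ρc, Complex.real_smul, smul_eq_mul, hia, if_true, if_false]
        push_cast
        ring
    · simp [ρc, Matrix.one_apply, h, Matrix.diagonal_apply_ne _ h]
  have hdiff : ∀ i, p i • ρ i - p i • σ i = Matrix.diagonal
      fun j => ((if j = i then (d : ℝ)⁻¹ * ε * (1 - (d : ℝ)⁻¹)
        else -((d : ℝ)⁻¹ * ε * (d : ℝ)⁻¹) : ℝ) : ℂ) := by
    intro i
    rw [hρ i, hσ i]
    ext a b
    rcases eq_or_ne a b with h | h
    · subst h
      by_cases hia : a = i
      all_goals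
        simp only [Matrix.sub_apply, Matrix.smul_apply, Matrix.diagonal_apply_eq, p,
          Complex.real_smul, hia, if_true, if_false]
        push_cast
        ring
    · simp [Matrix.diagonal_apply_ne _ h]
  have hsumρ : ∑ i, p i • ρ i = Matrix.diagonal
      fun _ : Fin d => (((d : ℝ)⁻¹ : ℝ) : ℂ) := by
    ext a b
    rw [Matrix.sum_apply]
    rcases eq_or_ne a b with h | h
    · subst h
      simp only [hρ, p, Matrix.smul_apply, Matrix.diagonal_apply_eq, Complex.real_smul,
        ← Complex.ofReal_mul, ← Complex.ofReal_sum, Complex.ofReal_inj]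
      rw [← Finset.mul_sum, sum_if' a 1 0]
      ring
    · simp [hρ, Matrix.diagonal_apply_ne _ h]
  have hsumσ : ∑ i, p i • σ i = Matrix.diagonal
      fun _ : Fin d => (((d : ℝ)⁻¹ : ℝ) : ℂ) := by
    ext a b
    rw [Matrix.sum_apply]
    rcases eq_or_ne a b with h | h
    · subst h
      simp only [hσ, p, Matrix.smul_apply, Matrix.diagonal_apply_eq, Complex.real_smul]
      simp only [← Complex.ofReal_mul, ← Complex.ofReal_sum, Complex.ofReal_inj]
      rw [← Finset.mul_sum, sum_if' a (1 - ε + ε * (d : ℝ)⁻¹) (ε * (d : ℝ)⁻¹)]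
      have hone : 1 - ε + ε * (d : ℝ)⁻¹ + ((d : ℝ) - 1) * (ε * (d : ℝ)⁻¹) = 1 := by
        field_simp
        ring
      rw [hone, mul_one]
    · simp [hσ, Matrix.diagonal_apply_ne _ h]
  -- entropies
  have hninv : Real.negMulLog ((d : ℝ)⁻¹) = (d : ℝ)⁻¹ * Real.log d := by
    rw [Real.negMulLog, Real.log_inv]; ring
  have hvρ : ∀ i, vnEntropy (ρ i) = 0 := by
    intro i
    rw [vnEntropy_diagonal _ _ (hρ i)]
    simp [apply_ite Real.negMulLog]
  have hvρc : vnEntropy (∑ i, p i • ρ i) = Real.log d := by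
    rw [vnEntropy_diagonal _ _ hsumρ, Finset.sum_const, Finset.card_univ, Fintype.card_fin,
      nsmul_eq_mul, hninv]
    field_simp
  have hvσc : vnEntropy (∑ i, p i • σ i) = Real.log d := by
    rw [vnEntropy_diagonal _ _ hsumσ, Finset.sum_const, Finset.card_univ, Fintype.card_fin,
      nsmul_eq_mul, hninv]
    field_simp
  set Hs : ℝ := Real.negMulLog (1 - ε + ε * (d : ℝ)⁻¹)
      + ((d : ℝ) - 1) * Real.negMulLog (ε * (d : ℝ)⁻¹) with hHs
  have hvσ : ∀ i, vnEntropy (σ i) = Hs := by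
    intro i
    rw [vnEntropy_diagonal _ _ (hσ i)]
    simp only [apply_ite Real.negMulLog]
    rw [sum_if]
  refine ⟨?_, ?_, ?_⟩
  · -- trace norm part
    have htr : ∀ i : Fin d, traceNorm (p i • ρ i - p i • σ i)
        = (d : ℝ)⁻¹ * ε * (1 - (d : ℝ)⁻¹) + ((d : ℝ) - 1) * ((d : ℝ)⁻¹ * ε * (d : ℝ)⁻¹) := by
      intro i
      rw [traceNorm_diagonal _ _ (hdiff i)]
      have : ∀ j : Fin d, |(if j = i then (d : ℝ)⁻¹ * ε * (1 - (d : ℝ)⁻¹)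
          else -((d : ℝ)⁻¹ * ε * (d : ℝ)⁻¹) : ℝ)|
          = (if j = i then (d : ℝ)⁻¹ * ε * (1 - (d : ℝ)⁻¹)
            else (d : ℝ)⁻¹ * ε * (d : ℝ)⁻¹ : ℝ) := by
        intro j
        by_cases hji : j = i
        · rw [if_pos hji, if_pos hji]
          have h1 : (0:ℝ) ≤ 1 - (d : ℝ)⁻¹ := by linarith
          exact abs_of_nonneg (by positivity)
        · rw [if_neg hji, if_neg hji, abs_neg]
          exact abs_of_nonneg (by positivity)
      rw [Finset.sum_congr rfl fun j _ => this j, sum_if]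
    rw [Finset.sum_congr rfl fun i _ => htr i, Finset.sum_const, Finset.card_univ,
      Fintype.card_fin, nsmul_eq_mul]
    field_simp
    ring
  · -- holevo part
    rw [holevo, holevo, hvρc, hvσc, hvσ ⟨0, hd⟩]
    simp only [hvρ, hvσ, mul_zero, Finset.sum_const, Finset.card_univ, Fintype.card_fin,
      nsmul_eq_mul]
    have hp : p = fun _ : Fin d => (d : ℝ)⁻¹ := rfl
    rw [hp]
    simp only [Finset.sum_const, Finset.card_univ, Fintype.card_fin, nsmul_eq_mul]
    field_simp
    ring
  · -- inequality
    rw [hvσ ⟨0, hd⟩]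
    have hcc := Real.concaveOn_negMulLog.2
    have h1 : ε * ((d : ℝ)⁻¹ * Real.log d) ≤ Real.negMulLog (1 - ε + ε * (d : ℝ)⁻¹) := by
      have h := hcc (Set.mem_Ici.mpr (zero_le_one' ℝ)) (Set.mem_Ici.mpr hinv0)
        (by linarith : (0:ℝ) ≤ 1 - ε) hε0.le (by ring)
      simp only [smul_eq_mul, Real.negMulLog_one, mul_one, mul_zero, zero_add] at h
      rwa [hninv] at h
    have h2 : ε * ((d : ℝ)⁻¹ * Real.log d) ≤ Real.negMulLog (ε * (d : ℝ)⁻¹) := by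
      have h := hcc (Set.mem_Ici.mpr (le_refl (0:ℝ))) (Set.mem_Ici.mpr hinv0)
        (by linarith : (0:ℝ) ≤ 1 - ε) hε0.le (by ring)
      simp only [smul_eq_mul, Real.negMulLog_zero, mul_zero, zero_add] at h
      rwa [hninv] at h
    have h3 : ((d : ℝ) - 1) * (ε * ((d : ℝ)⁻¹ * Real.log d))
        ≤ ((d : ℝ) - 1) * Real.negMulLog (ε * (d : ℝ)⁻¹) :=
      mul_le_mul_of_nonneg_left h2 (by linarith)
    have key : ε * ((d : ℝ)⁻¹ * Real.log d)
        + ((d : ℝ) - 1) * (ε * ((d : ℝ)⁻¹ * Real.log d)) = ε * Real.log d := by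
      field_simp
      ring
    rw [ge_iff_le, ← key, hHs]
    exact add_le_add h1 h3
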